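/- Let Z_w(t) and Z_diff(t) be the standardized versions of R_w(t) and R_diff(t) = R₁(t) − R₂(t), i.e., Z(t) = (R(t) − E[R(t)])/√Var(R(t)). Then the generalized edge-count statistic S(t), defined as the quadratic form (R₁(t)−E R₁(t), R₂(t)−E R₂(t)) Σ(t)⁻¹ (R₁(t)−E R₁(t), R₂(t)−E R₂(t))ᵀ where Σ(t) is the covariance matrix of (R₁(t), R₂(t)), satisfies S(t) = Z_w(t)² + Z_diff(t)². -/

import Mathlib

/-!
`S(t)` is the squared Mahalanobis norm of the centred vector `(R₁, R₂)`, and that norm does not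
change under an invertible linear change of variables. The matrix `M = !![q, p; 1, -1]`
(of determinant `-1`) sends `(R₁, R₂)` to `(R_w, R_diff)`, and these two are uncorrelated, so in
the new coordinates the covariance matrix is diagonal and the norm is `Z_w² + Z_diff²`.

To see that `R_w` and `R_diff` are uncorrelated, let `I_v` be the indicator that `v` gets a label
`≤ t`. The edge terms of `R_w` are `q I_a I_b + p (1 - I_a)(1 - I_b)` and those of `R_diff` are
`I_c + I_d - 1`, so it suffices that every such `W_ab` is uncorrelated with every `I_v`. For
`v = a` this is a direct computation from `E I_a = t/n` and `E I_a I_b = t(t-1)/(n(n-1))`, and it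
is here that `p = (t-1)/(n-2)` is needed. For `v ∉ {a, b}`, exchangeability makes all the
`Cov(W_ab, I_v)` equal, and together with the two vanishing ones they sum to
`Cov(W_ab, ∑ I_v) = Cov(W_ab, t) = 0`. The two moments are found in the same way from
`∑ I_v = t`.
-/
open Finset
open scoped Classical

noncomputable section

/-- Label of vertex `v` under permutation `π`: a value in `{1,...,n}`. -/
def lab {n : ℕ} (π : Equiv.Perm (Fin n)) (v : Fin n) : ℕ := (π v).val + 1

/-- Number of edges of `G` with both endpoint labels `≤ t`. -/
def R1 {n : ℕ} (G : SimpleGraph (Fin n)) (t : ℕ) (π : Equiv.Perm (Fin n)) : ℕ :=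
  (G.edgeFinset.filter (fun e => ∀ v ∈ e, lab π v ≤ t)).card

/-- Number of edges of `G` with both endpoint labels `> t`. -/
def R2 {n : ℕ} (G : SimpleGraph (Fin n)) (t : ℕ) (π : Equiv.Perm (Fin n)) : ℕ :=
  (G.edgeFinset.filter (fun e => ∀ v ∈ e, t < lab π v)).card

/-- Number of edges of `G` with one endpoint label `≤ t` and the other `> t`. -/
def R0 {n : ℕ} (G : SimpleGraph (Fin n)) (t : ℕ) (π : Equiv.Perm (Fin n)) : ℕ :=
  (G.edgeFinset.filter (fun e => (∃ v ∈ e, lab π v ≤ t) ∧ (∃ v ∈ e, t < lab π v))).card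

/-- Expectation under the permutation null distribution (uniform over all `n!` permutations). -/
def Ex {n : ℕ} (f : Equiv.Perm (Fin n) → ℝ) : ℝ :=
  (∑ π : Equiv.Perm (Fin n), f π) / (Nat.factorial n)

/-- Variance under the permutation null distribution. -/
def Var {n : ℕ} (f : Equiv.Perm (Fin n) → ℝ) : ℝ := Ex (fun π => (f π - Ex f) ^ 2)

/-- Covariance under the permutation null distribution. -/
def Cov {n : ℕ} (f g : Equiv.Perm (Fin n) → ℝ) : ℝ :=
  Ex (fun π => (f π - Ex f) * (g π - Ex g))

/-- Weighted edge count `R_w(t) = q(t) R₁(t) + p(t) R₂(t)` with `p(t) = (t-1)/(n-2)`. -/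
def Rw {n : ℕ} (G : SimpleGraph (Fin n)) (t : ℕ) (π : Equiv.Perm (Fin n)) : ℝ :=
  (1 - ((t : ℝ) - 1) / ((n : ℝ) - 2)) * (R1 G t π : ℝ)
    + (((t : ℝ) - 1) / ((n : ℝ) - 2)) * (R2 G t π : ℝ)


/-- Difference of within-group edge counts `R_diff(t) = R₁(t) - R₂(t)`. -/
def Rdiff {n : ℕ} (G : SimpleGraph (Fin n)) (t : ℕ) (π : Equiv.Perm (Fin n)) : ℝ :=
  (R1 G t π : ℝ) - (R2 G t π : ℝ)


/-- Standardized weighted edge-count statistic. -/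
def Zw {n : ℕ} (G : SimpleGraph (Fin n)) (t : ℕ) (π : Equiv.Perm (Fin n)) : ℝ :=
  (Rw G t π - Ex (fun σ => Rw G t σ)) / Real.sqrt (Var (fun σ => Rw G t σ))

/-- Standardized difference-of-within-edge-counts statistic. -/
def Zdiff {n : ℕ} (G : SimpleGraph (Fin n)) (t : ℕ) (π : Equiv.Perm (Fin n)) : ℝ :=
  (Rdiff G t π - Ex (fun σ => Rdiff G t σ)) / Real.sqrt (Var (fun σ => Rdiff G t σ))

/-- Covariance matrix `Σ(t)` of `(R₁(t), R₂(t))`. -/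
def SigmaMat {n : ℕ} (G : SimpleGraph (Fin n)) (t : ℕ) : Matrix (Fin 2) (Fin 2) ℝ :=
  !![Var (fun π => (R1 G t π : ℝ)), Cov (fun π => (R1 G t π : ℝ)) (fun π => (R2 G t π : ℝ));
     Cov (fun π => (R1 G t π : ℝ)) (fun π => (R2 G t π : ℝ)), Var (fun π => (R2 G t π : ℝ))]

/-- Generalized edge-count statistic `S(t)`, a quadratic form in the centered counts. -/
def S {n : ℕ} (G : SimpleGraph (Fin n)) (t : ℕ) (π : Equiv.Perm (Fin n)) : ℝ :=
  dotProduct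
    ![(R1 G t π : ℝ) - Ex (fun σ => (R1 G t σ : ℝ)),
      (R2 G t π : ℝ) - Ex (fun σ => (R2 G t σ : ℝ))]
    ((SigmaMat G t)⁻¹.mulVec
      ![(R1 G t π : ℝ) - Ex (fun σ => (R1 G t σ : ℝ)),
        (R2 G t π : ℝ) - Ex (fun σ => (R2 G t σ : ℝ))])


open Matrix Equiv

section NullMoments

variable {n : ℕ}

lemma Ex_add (f g : Perm (Fin n) → ℝ) : Ex (fun π => f π + g π) = Ex f + Ex g := by
  simp only [Ex, sum_add_distrib, add_div]

lemma Ex_sub (f g : Perm (Fin n) → ℝ) : Ex (fun π => f π - g π) = Ex f - Ex g := by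
  simp only [Ex, sum_sub_distrib, sub_div]

lemma Ex_const_mul (c : ℝ) (f : Perm (Fin n) → ℝ) : Ex (fun π => c * f π) = c * Ex f := by
  simp only [Ex, ← mul_sum, mul_div_assoc]

lemma Ex_sum {ι : Type*} (s : Finset ι) (F : ι → Perm (Fin n) → ℝ) :
    Ex (fun π => ∑ i ∈ s, F i π) = ∑ i ∈ s, Ex (F i) := by
  simp only [Ex, sum_div]
  exact sum_comm

lemma Ex_const (c : ℝ) : Ex (fun _ : Perm (Fin n) => c) = c := by
  simp [Ex, Fintype.card_perm, Nat.factorial_ne_zero]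

lemma Ex_comp_mul_right (σ : Perm (Fin n)) (f : Perm (Fin n) → ℝ) :
    Ex (fun π => f (π * σ)) = Ex f := by
  rw [Ex, Ex, ← Equiv.sum_comp (Equiv.mulRight σ) f]
  rfl

lemma Var_eq_Cov (f : Perm (Fin n) → ℝ) : Var f = Cov f f := by
  simp only [Var, Cov, sq]

lemma Cov_comm (f g : Perm (Fin n) → ℝ) : Cov f g = Cov g f := by
  simp only [Cov, mul_comm]

lemma Cov_eq_sub (f g : Perm (Fin n) → ℝ) :
    Cov f g = Ex (fun π => f π * g π) - Ex f * Ex g := by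
  have h : ∀ π,
      (f π - Ex f) * (g π - Ex g) = f π * g π - Ex g * f π - Ex f * (g π - Ex g) :=
    fun π => by ring
  simp only [Cov, h, Ex_sub, Ex_const_mul, Ex_const]
  ring

lemma Cov_sum_left {ι : Type*} (s : Finset ι) (F : ι → Perm (Fin n) → ℝ)
    (g : Perm (Fin n) → ℝ) :
    Cov (fun π => ∑ i ∈ s, F i π) g = ∑ i ∈ s, Cov (F i) g := by
  simp only [Cov, Ex_sum, ← sum_sub_distrib, sum_mul]

lemma Cov_sum_right {ι : Type*} (s : Finset ι) (f : Perm (Fin n) → ℝ)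
    (G : ι → Perm (Fin n) → ℝ) :
    Cov f (fun π => ∑ i ∈ s, G i π) = ∑ i ∈ s, Cov f (G i) := by
  simp only [Cov_comm f, Cov_sum_left]

lemma Cov_const_mul_left (c : ℝ) (f g : Perm (Fin n) → ℝ) :
    Cov (fun π => c * f π) g = c * Cov f g := by
  simp only [Cov, Ex_const_mul, ← mul_sub, mul_assoc]

lemma Cov_const_mul_right (c : ℝ) (f g : Perm (Fin n) → ℝ) :
    Cov f (fun π => c * g π) = c * Cov f g := by
  rw [Cov_comm, Cov_const_mul_left, Cov_comm]

lemma Cov_add_right (f g h : Perm (Fin n) → ℝ) :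
    Cov f (fun π => g π + h π) = Cov f g + Cov f h := by
  simp only [Cov, Ex_add, add_sub_add_comm, mul_add]

lemma Cov_sub_const_right (f g : Perm (Fin n) → ℝ) (c : ℝ) :
    Cov f (fun π => g π - c) = Cov f g := by
  simp only [Cov, Ex_sub, Ex_const, sub_sub_sub_cancel_right]

lemma Cov_const_right (f : Perm (Fin n) → ℝ) (c : ℝ) : Cov f (fun _ => c) = 0 := by
  simp only [Cov, Ex_const, sub_self, mul_zero]

lemma Cov_comp_mul_right (σ : Perm (Fin n)) (f g : Perm (Fin n) → ℝ) :
    Cov (fun π => f (π * σ)) (fun π => g (π * σ)) = Cov f g := by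
  simp only [Cov, Ex_comp_mul_right σ f, Ex_comp_mul_right σ g]
  exact Ex_comp_mul_right σ fun π => (f π - Ex f) * (g π - Ex g)

end NullMoments

section Mahalanobis

variable {n : ℕ} {ι κ : Type*} [Fintype ι]

def covMatrix (F : ι → Perm (Fin n) → ℝ) : Matrix ι ι ℝ :=
  Matrix.of fun i j => Cov (F i) (F j)

def centered (F : ι → Perm (Fin n) → ℝ) (π : Perm (Fin n)) : ι → ℝ :=
  fun i => F i π - Ex (F i)

def mahalanobisSq [DecidableEq ι] (F : ι → Perm (Fin n) → ℝ) (π : Perm (Fin n)) : ℝ :=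
  centered F π ⬝ᵥ (covMatrix F)⁻¹ *ᵥ centered F π

lemma centered_mulVec (M : Matrix κ ι ℝ) (F : ι → Perm (Fin n) → ℝ) (π : Perm (Fin n)) :
    centered (fun k σ => (M *ᵥ fun i => F i σ) k) π = M *ᵥ centered F π := by
  ext k
  simp only [centered, mulVec, dotProduct, Ex_sum, Ex_const_mul, mul_sub, sum_sub_distrib]

lemma covMatrix_mulVec (M : Matrix κ ι ℝ) (F : ι → Perm (Fin n) → ℝ) :
    covMatrix (fun k σ => (M *ᵥ fun i => F i σ) k) = M * covMatrix F * Mᵀ := by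
  ext k l
  simp only [covMatrix, of_apply, mulVec, dotProduct, Cov_sum_left, Cov_sum_right,
    Cov_const_mul_left, Cov_const_mul_right, mul_apply, transpose_apply, sum_mul, mul_sum]
  exact sum_congr rfl fun _ _ => sum_congr rfl fun _ _ => by ring

lemma dotProduct_inv_mulVec_conj [DecidableEq ι] (A M : Matrix ι ι ℝ) (hM : IsUnit M.det)
    (x : ι → ℝ) :
    (M *ᵥ x) ⬝ᵥ (M * A * Mᵀ)⁻¹ *ᵥ (M *ᵥ x) = x ⬝ᵥ A⁻¹ *ᵥ x := by
  have hMt : IsUnit Mᵀ.det := by rwa [det_transpose]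
  rw [Matrix.mul_inv_rev, Matrix.mul_inv_rev, ← mulVec_mulVec, ← mulVec_mulVec, mulVec_mulVec x,
    nonsing_inv_mul M hM, one_mulVec, dotProduct_mulVec, ← vecMul_transpose, vecMul_vecMul,
    mul_nonsing_inv _ hMt, vecMul_one]

lemma mahalanobisSq_eq_of_mulVec [DecidableEq ι] (M : Matrix ι ι ℝ) (hM : IsUnit M.det)
    {F G : ι → Perm (Fin n) → ℝ} (hFG : ∀ σ, (fun k => G k σ) = M *ᵥ fun i => F i σ)
    (π : Perm (Fin n)) : mahalanobisSq G π = mahalanobisSq F π := by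
  obtain rfl : G = fun k σ => (M *ᵥ fun i => F i σ) k :=
    funext₂ fun k σ => congrFun (hFG σ) k
  rw [mahalanobisSq, centered_mulVec, covMatrix_mulVec, dotProduct_inv_mulVec_conj _ _ hM]
  rfl

lemma mahalanobisSq_of_pairwise_cov_eq_zero [DecidableEq ι] (F : ι → Perm (Fin n) → ℝ)
    (hcov : Pairwise fun i j => Cov (F i) (F j) = 0) (hvar : ∀ i, 0 < Var (F i))
    (π : Perm (Fin n)) :
    mahalanobisSq F π = ∑ i, ((F i π - Ex (F i)) / √(Var (F i))) ^ 2 := by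
  have hdiag : covMatrix F = diagonal fun i => Var (F i) := by
    ext i j
    rcases eq_or_ne i j with rfl | hij
    · simp [covMatrix, Var_eq_Cov]
    · simp [covMatrix, hcov hij, hij]
  have hinv : (covMatrix F)⁻¹ = diagonal fun i => (Var (F i))⁻¹ := by
    rw [hdiag]
    refine inv_eq_left_inv ?_
    rw [diagonal_mul_diagonal, ← diagonal_one]
    exact congrArg diagonal (funext fun i => inv_mul_cancel₀ (hvar i).ne')
  rw [mahalanobisSq, hinv, dotProduct]
  simp only [mulVec_diagonal]
  refine sum_congr rfl fun i _ => ?_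
  rw [div_pow, Real.sq_sqrt (hvar i).le, centered]
  ring

end Mahalanobis

section Exchangeability

variable {n t : ℕ}

def early (t : ℕ) (π : Perm (Fin n)) (v : Fin n) : ℝ := if lab π v ≤ t then 1 else 0

lemma early_mul_apply (π σ : Perm (Fin n)) (v : Fin n) :
    early t (π * σ) v = early t π (σ v) :=
  rfl

lemma early_mul_self (π : Perm (Fin n)) (v : Fin n) :
    early t π v * early t π v = early t π v := by
  unfold early
  split_ifs <;> norm_num

lemma sum_early (ht : t ≤ n) (π : Perm (Fin n)) : ∑ v, early t π v = t := by
  refine (Equiv.sum_comp π fun x => if (x : ℕ) + 1 ≤ t then (1 : ℝ) else 0).trans ?_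
  rw [← natCast_card_filter]
  simp [Fin.card_filter_val_lt, ht]

lemma Ex_early (ht : t ≤ n) (v : Fin n) : Ex (fun π => early t π v) = t / n := by
  have hsym : ∀ w, Ex (fun π => early t π w) = Ex (fun π => early t π v) := fun w => by
    rw [← Ex_comp_mul_right (swap v w) fun π => early t π v]
    simp only [early_mul_apply, swap_apply_left]
  have hn : (n : ℝ) ≠ 0 := Nat.cast_ne_zero.mpr (Fin.pos v).ne'
  have hsum : (n : ℝ) * Ex (fun π => early t π v) = t :=
    calc (n : ℝ) * Ex (fun π => early t π v) = ∑ w, Ex (fun π => early t π w) := by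
          rw [sum_congr rfl fun w _ => hsym w, sum_const, card_univ, Fintype.card_fin,
            nsmul_eq_mul]
      _ = t := by
          rw [← Ex_sum]
          simp_rw [sum_early ht]
          exact Ex_const _
  rw [eq_div_iff hn, ← hsum, mul_comm]

lemma Ex_early_mul_early (ht : t ≤ n) {a b : Fin n} (hab : a ≠ b) :
    Ex (fun π => early t π a * early t π b) = t * (t - 1) / (n * (n - 1)) := by
  have hsym : ∀ c ∈ univ.erase a,
      Ex (fun π => early t π a * early t π c) = Ex (fun π => early t π a * early t π b) :=
    fun c hc => by
      rw [← Ex_comp_mul_right (swap b c) fun π => early t π a * early t π b]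
      simp only [early_mul_apply, swap_apply_left,
        swap_apply_of_ne_of_ne hab (ne_of_mem_erase hc).symm]
  have hrow : ∀ π,
      ∑ c ∈ univ.erase a, early t π a * early t π c = (t - 1) * early t π a :=
    fun π => by
      rw [← mul_sum, sum_erase_eq_sub (mem_univ a), sum_early ht, mul_sub, early_mul_self]
      ring
  have h2n : 2 ≤ n := Fin.nontrivial_iff_two_le.mp (nontrivial_of_ne a b hab)
  have hsum : ((n : ℝ) - 1) * Ex (fun π => early t π a * early t π b) = (t - 1) * (t / n) :=
    calc ((n : ℝ) - 1) * Ex (fun π => early t π a * early t π b)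
        = ∑ c ∈ univ.erase a, Ex (fun π => early t π a * early t π c) := by
          rw [sum_congr rfl hsym, sum_const, card_erase_of_mem (mem_univ a), card_univ,
            Fintype.card_fin, nsmul_eq_mul, Nat.cast_pred (by omega)]
      _ = (t - 1) * (t / n) := by
          rw [← Ex_sum]
          simp_rw [hrow]
          rw [Ex_const_mul, Ex_early ht]
  have hn : (n : ℝ) ≠ 0 := by positivity
  have hn1 : (n : ℝ) - 1 ≠ 0 := by
    have : (2 : ℝ) ≤ n := by exact_mod_cast h2n
    linarith
  rw [eq_div_of_mul_eq hn1 ((mul_comm _ _).trans hsum)]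
  field_simp

end Exchangeability

section Orthogonality

variable {n t : ℕ}

def weight (n t : ℕ) : ℝ := ((t : ℝ) - 1) / ((n : ℝ) - 2)

def pairWeight (t : ℕ) (π : Perm (Fin n)) (a b : Fin n) : ℝ :=
  (1 - weight n t) * (early t π a * early t π b)
    + weight n t * ((1 - early t π a) * (1 - early t π b))

lemma pairWeight_comm (π : Perm (Fin n)) (a b : Fin n) :
    pairWeight t π a b = pairWeight t π b a := by
  simp only [pairWeight, mul_comm]

lemma Cov_pairWeight_early_left (hn : n ≠ 2) (ht : t ≤ n) {a b : Fin n} (hab : a ≠ b) :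
    Cov (fun π => pairWeight t π a b) (fun π => early t π a) = 0 := by
  have hprod : ∀ π, pairWeight t π a b * early t π a
      = (1 - weight n t) * (early t π a * early t π b) := fun π => by
    simp only [pairWeight, early]
    split_ifs <;> ring
  have hlate : ∀ π, (1 - early t π a) * (1 - early t π b)
      = early t π a * early t π b - early t π a - early t π b + 1 := fun π => by ring
  rw [Cov_eq_sub]
  simp only [hprod]
  simp only [pairWeight, hlate, Ex_add, Ex_sub, Ex_const_mul, Ex_const,
    Ex_early ht, Ex_early_mul_early ht hab]
  have h2n : (2 : ℝ) ≤ n := by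
    exact_mod_cast Fin.nontrivial_iff_two_le.mp (nontrivial_of_ne a b hab)
  have hn0 : (n : ℝ) ≠ 0 := by positivity
  have hn1 : (n : ℝ) - 1 ≠ 0 := by linarith
  have hn2 : (n : ℝ) - 2 ≠ 0 := sub_ne_zero.mpr (by exact_mod_cast hn)
  simp only [weight]
  field_simp
  ring

lemma Cov_pairWeight_early_right (hn : n ≠ 2) (ht : t ≤ n) {a b : Fin n} (hab : a ≠ b) :
    Cov (fun π => pairWeight t π a b) (fun π => early t π b) = 0 := by
  simp_rw [pairWeight_comm _ a b]
  exact Cov_pairWeight_early_left hn ht hab.symm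

lemma Cov_pairWeight_early (hn : n ≠ 2) (ht : t ≤ n) {a b : Fin n} (hab : a ≠ b) (v : Fin n) :
    Cov (fun π => pairWeight t π a b) (fun π => early t π v) = 0 := by
  rcases eq_or_ne v a with rfl | hva
  · exact Cov_pairWeight_early_left hn ht hab
  rcases eq_or_ne v b with rfl | hvb
  · exact Cov_pairWeight_early_right hn ht hab
  set s := (univ.erase a).erase b
  have hv : v ∈ s := mem_erase.mpr ⟨hvb, mem_erase.mpr ⟨hva, mem_univ v⟩⟩
  have hsym : ∀ w ∈ s, Cov (fun π => pairWeight t π a b) (fun π => early t π w)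
      = Cov (fun π => pairWeight t π a b) (fun π => early t π v) := fun w hw => by
    have hwb := ne_of_mem_erase hw
    have hwa := ne_of_mem_erase (mem_of_mem_erase hw)
    rw [← Cov_comp_mul_right (swap v w) (fun π => pairWeight t π a b) fun π => early t π v]
    simp only [pairWeight, early_mul_apply, swap_apply_left,
      swap_apply_of_ne_of_ne hva.symm hwa.symm, swap_apply_of_ne_of_ne hvb.symm hwb.symm]
  have htotal : ∑ w, Cov (fun π => pairWeight t π a b) (fun π => early t π w) = 0 := by
    rw [← Cov_sum_right]
    simp_rw [sum_early ht]
    exact Cov_const_right _ _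
  rw [← add_sum_erase _ _ (mem_univ a),
    ← add_sum_erase _ _ (mem_erase.mpr ⟨hab.symm, mem_univ b⟩),
    Cov_pairWeight_early_left hn ht hab, Cov_pairWeight_early_right hn ht hab,
    sum_congr rfl hsym, sum_const, zero_add, zero_add, smul_eq_zero] at htotal
  exact htotal.resolve_left (card_ne_zero_of_mem hv)

end Orthogonality

section EdgeCounts

variable {n t : ℕ}

lemma ite_forall_mem_mk_lab_le (π : Perm (Fin n)) (a b : Fin n) :
    (if ∀ v ∈ s(a, b), lab π v ≤ t then (1 : ℝ) else 0) = early t π a * early t π b := by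
  simp only [Sym2.mem_iff, forall_eq_or_imp, forall_eq, early, ite_zero_mul_ite_zero, mul_one]

lemma ite_forall_mem_mk_lt_lab (π : Perm (Fin n)) (a b : Fin n) :
    (if ∀ v ∈ s(a, b), t < lab π v then (1 : ℝ) else 0)
      = (1 - early t π a) * (1 - early t π b) := by
  simp only [Sym2.mem_iff, forall_eq_or_imp, forall_eq, early, ← not_le]
  split_ifs <;> simp_all

lemma Rw_eq_sum (G : SimpleGraph (Fin n)) (π : Perm (Fin n)) :
    Rw G t π = ∑ e ∈ G.edgeFinset,
      ((1 - weight n t) * (if ∀ v ∈ e, lab π v ≤ t then 1 else 0)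
        + weight n t * (if ∀ v ∈ e, t < lab π v then 1 else 0)) := by
  simp only [Rw, R1, R2, natCast_card_filter, mul_sum, ← sum_add_distrib, weight]

lemma Rdiff_eq_sum (G : SimpleGraph (Fin n)) (π : Perm (Fin n)) :
    Rdiff G t π = ∑ e ∈ G.edgeFinset,
      ((if ∀ v ∈ e, lab π v ≤ t then 1 else 0)
        - (if ∀ v ∈ e, t < lab π v then 1 else 0)) := by
  simp only [Rdiff, R1, R2, natCast_card_filter, ← sum_sub_distrib]

theorem Cov_Rw_Rdiff (hn : n ≠ 2) (ht : t ≤ n) (G : SimpleGraph (Fin n)) :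
    Cov (fun π => Rw G t π) (fun π => Rdiff G t π) = 0 := by
  simp only [Rw_eq_sum, Rdiff_eq_sum]
  rw [Cov_sum_left]
  refine sum_eq_zero fun e he => ?_
  rw [Cov_sum_right]
  refine sum_eq_zero fun e' _ => ?_
  induction e using Sym2.ind with | h a b => ?_
  induction e' using Sym2.ind with | h c d => ?_
  have hab : a ≠ b := G.ne_of_adj (SimpleGraph.mem_edgeFinset.mp he)
  have hcd : ∀ π : Perm (Fin n),
      early t π c * early t π d - (1 - early t π c) * (1 - early t π d)
        = early t π c + early t π d - 1 := fun π => by ring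
  simp only [ite_forall_mem_mk_lab_le, ite_forall_mem_mk_lt_lab, hcd]
  rw [Cov_sub_const_right, Cov_add_right]
  change Cov (fun π => pairWeight t π a b) _ + Cov (fun π => pairWeight t π a b) _ = 0
  rw [Cov_pairWeight_early hn ht hab, Cov_pairWeight_early hn ht hab, add_zero]

lemma S_eq_mahalanobisSq (G : SimpleGraph (Fin n)) (π : Perm (Fin n)) :
    S G t π = mahalanobisSq ![fun σ => (R1 G t σ : ℝ), fun σ => (R2 G t σ : ℝ)] π := by
  have hSigma :
      SigmaMat G t = covMatrix ![fun σ => (R1 G t σ : ℝ), fun σ => (R2 G t σ : ℝ)] := by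
    ext i j
    fin_cases i <;> fin_cases j <;> simp [SigmaMat, covMatrix, Var_eq_Cov, Cov_comm]
  have hcentered : centered ![fun σ => (R1 G t σ : ℝ), fun σ => (R2 G t σ : ℝ)] π
      = ![(R1 G t π : ℝ) - Ex (fun σ => (R1 G t σ : ℝ)),
          (R2 G t π : ℝ) - Ex (fun σ => (R2 G t σ : ℝ))] := by
    ext i
    fin_cases i <;> rfl
  rw [S, hSigma, mahalanobisSq, hcentered]

end EdgeCounts

theorem S_eq_Zw_sq_add_Zdiff_sq_general (n t : ℕ) (hn : 4 ≤ n) (ht2 : t < n)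
    (G : SimpleGraph (Fin n))
    (hVw : 0 < Var (fun π => Rw G t π))
    (hVd : 0 < Var (fun π => Rdiff G t π)) :
    ∀ π : Equiv.Perm (Fin n), S G t π = Zw G t π ^ 2 + Zdiff G t π ^ 2 := by
  intro π
  set M : Matrix (Fin 2) (Fin 2) ℝ := !![1 - weight n t, weight n t; 1, -1]
  have hM : IsUnit M.det := by simp [M, det_fin_two_of]
  have hMR : ∀ σ, (fun k => ![fun σ => Rw G t σ, fun σ => Rdiff G t σ] k σ)
      = M *ᵥ fun i => ![fun σ => (R1 G t σ : ℝ), fun σ => (R2 G t σ : ℝ)] i σ := by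
    intro σ
    ext k
    fin_cases k <;> simp [M, Rw, Rdiff, weight, mulVec, dotProduct, sub_eq_add_neg]
  have horth := Cov_Rw_Rdiff (by omega) ht2.le G
  rw [S_eq_mahalanobisSq, ← mahalanobisSq_eq_of_mulVec M hM hMR,
    mahalanobisSq_of_pairwise_cov_eq_zero, Fin.sum_univ_two]
  · rfl
  · intro i j hij
    fin_cases i <;> fin_cases j <;> simp_all [Cov_comm]
  · intro i
    fin_cases i
    exacts [hVw, hVd]

theorem S_eq_Zw_sq_add_Zdiff_sq (n t : ℕ) (hn : 4 ≤ n) (ht1 : 1 ≤ t) (ht2 : t < n)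
    (G : SimpleGraph (Fin n))
    (hSigma : IsUnit (SigmaMat G t).det)
    (hVw : 0 < Var (fun π => Rw G t π))
    (hVd : 0 < Var (fun π => Rdiff G t π)) :
    ∀ π : Equiv.Perm (Fin n), S G t π = Zw G t π ^ 2 + Zdiff G t π ^ 2 :=
  S_eq_Zw_sq_add_Zdiff_sq_general n t hn ht2 G hVw hVd
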